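/- arXiv:2407.01877 — 3 statements merged into one kernel-verified Lean document; each statement's English description precedes it below -/
import Mathlib

section
/- Let Y be a locally compact topological space and f : Y → ℂ a continuous open map such that 0 ∈ f(Y) and the preimage f⁻¹(0) is compact. Then there exist an open neighborhood V ⊆ Y of f⁻¹(0) and an open neighborhood Δ ⊆ ℂ of 0 such that the restriction f|_V : V → Δ is proper and surjective. -/
/-!
Cover `f⁻¹(0)` by an open set `U` with compact closure and let `Δ` be the part of `f(U)` not
met by the image of the frontier of `U`. Since `f` is open and `f(∂U)` is compact, `Δ` is open,
and it contains `0` because the whole fibre over `0` lies in `U`. Over `Δ` the map `f` sees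
`closure U` only through `U`, so for compact `K ⊆ Δ` the set `U ∩ f⁻¹(K)` equals the compact
set `closure U ∩ f⁻¹(K)`.
-/

open Set Metric

theorem IsCompact.exists_isOpen_superset_isCompact_closure {Y : Type*} [TopologicalSpace Y]
    (hloc : ∀ y : Y, ∃ U : Set Y, IsOpen U ∧ y ∈ U ∧ IsCompact (closure U))
    {K : Set Y} (hK : IsCompact K) : ∃ U, IsOpen U ∧ K ⊆ U ∧ IsCompact (closure U) := by
  choose W hW_open hW_mem hW_closure using hloc
  obtain ⟨t, -, hKt⟩ :=
    hK.elim_nhds_subcover W fun y _ => (hW_open y).mem_nhds (hW_mem y)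
  refine ⟨⋃ y ∈ t, W y, isOpen_biUnion fun y _ => hW_open y, hKt, ?_⟩
  rw [t.closure_biUnion]
  exact t.finite_toSet.isCompact_biUnion fun y _ => hW_closure y

section ImageAwayFromFrontier

variable {Y Z : Type*} [TopologicalSpace Y] {f : Y → Z} {U : Set Y}

def imageAwayFromFrontier (f : Y → Z) (U : Set Y) : Set Z :=
  f '' U \ f '' frontier U

theorem isOpen_imageAwayFromFrontier [TopologicalSpace Z] [T2Space Z] (hf : Continuous f)
    (hopen : IsOpenMap f) (hU : IsOpen U) (hU_closure : IsCompact (closure U)) :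
    IsOpen (imageAwayFromFrontier f U) :=
  (hopen U hU).sdiff
    ((hU_closure.of_isClosed_subset isClosed_frontier frontier_subset_closure).image hf).isClosed

theorem mem_imageAwayFromFrontier_of_preimage_subset {z : Z} (hU : IsOpen U)
    (hz : z ∈ range f) (hfiber : f ⁻¹' {z} ⊆ U) : z ∈ imageAwayFromFrontier f U := by
  obtain ⟨y, rfl⟩ := hz
  refine ⟨⟨y, hfiber rfl, rfl⟩, ?_⟩
  rintro ⟨x, hx_frontier, hx⟩
  exact hU.inter_frontier_eq.subset ⟨hfiber hx, hx_frontier⟩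

theorem image_inter_preimage_imageAwayFromFrontier :
    f '' (U ∩ f ⁻¹' imageAwayFromFrontier f U) = imageAwayFromFrontier f U := by
  rw [image_inter_preimage, inter_eq_right]
  exact sdiff_subset

theorem inter_preimage_imageAwayFromFrontier_inter_preimage {K : Set Z}
    (hK : K ⊆ imageAwayFromFrontier f U) :
    U ∩ f ⁻¹' imageAwayFromFrontier f U ∩ f ⁻¹' K = closure U ∩ f ⁻¹' K := by
  refine Subset.antisymm (inter_subset_inter_left _ (inter_subset_left.trans subset_closure)) ?_
  rintro y ⟨hy_closure, hyK⟩
  have hy_frontier : y ∉ frontier U := fun hy => (hK hyK).2 ⟨y, hy, rfl⟩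
  rw [closure_eq_self_union_frontier] at hy_closure
  exact ⟨⟨hy_closure.resolve_right hy_frontier, hK hyK⟩, hyK⟩

theorem isCompact_inter_preimage_imageAwayFromFrontier_inter_preimage
    [TopologicalSpace Z] [T2Space Z]
    (hf : Continuous f) (hU_closure : IsCompact (closure U)) {K : Set Z}
    (hK : K ⊆ imageAwayFromFrontier f U) (hK_compact : IsCompact K) :
    IsCompact (U ∩ f ⁻¹' imageAwayFromFrontier f U ∩ f ⁻¹' K) := by
  rw [inter_preimage_imageAwayFromFrontier_inter_preimage hK]
  exact hU_closure.inter_right (hK_compact.isClosed.preimage hf)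

end ImageAwayFromFrontier

/-- Lemma 2.1. For a locally compact space `Y` and a continuous open
map `f : Y → ℂ` with `0` in the image and compact fiber over `0`, there are an open
neighborhood `V` of `f⁻¹(0)` and an open neighborhood `Δ` of `0` such that
`f|_V : V → Δ` is proper and surjective. -/
theorem stmt0 {Y : Type*} [TopologicalSpace Y]
    (hloc : ∀ y : Y, ∃ U : Set Y, IsOpen U ∧ y ∈ U ∧ IsCompact (closure U))
    (f : Y → ℂ) (hf : Continuous f) (hopen : IsOpenMap f)
    (h0 : (0 : ℂ) ∈ range f) (hcpt : IsCompact (f ⁻¹' {0})) :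
    ∃ (V : Set Y) (Δ : Set ℂ), IsOpen V ∧ f ⁻¹' {0} ⊆ V ∧ IsOpen Δ ∧ (0 : ℂ) ∈ Δ ∧
      MapsTo f V Δ ∧ (∀ K : Set ℂ, K ⊆ Δ → IsCompact K → IsCompact (V ∩ f ⁻¹' K)) ∧
      Δ ⊆ f '' V := by
  obtain ⟨U, hU, hfiber, hU_closure⟩ := hcpt.exists_isOpen_superset_isCompact_closure hloc
  have hΔ : IsOpen (imageAwayFromFrontier f U) :=
    isOpen_imageAwayFromFrontier hf hopen hU hU_closure
  have h0Δ : (0 : ℂ) ∈ imageAwayFromFrontier f U :=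
    mem_imageAwayFromFrontier_of_preimage_subset hU h0 hfiber
  refine ⟨U ∩ f ⁻¹' imageAwayFromFrontier f U, imageAwayFromFrontier f U,
    hU.inter (hΔ.preimage hf), fun y hy => ⟨hfiber hy, by rwa [mem_preimage, hy]⟩, hΔ, h0Δ,
    fun y hy => hy.2,
    fun K hK hK_compact =>
      isCompact_inter_preimage_imageAwayFromFrontier_inter_preimage hf hU_closure hK hK_compact,
    image_inter_preimage_imageAwayFromFrontier.superset⟩
end

section
/- Let f be a bounded holomorphic function on the disc Ω = {|ζ| < ε₀} with Taylor expansion f(ζ) = a₀ + Σ_{n≥2} aₙζⁿ (i.e. a₁ = 0), and put M = sup_Ω |f|. Define F : {|x| < ε₀²} × {|y| < 2ε₀³} → ℂ by F(x,y) = a₀ + Σ_{m≥1} a_{2m} x^m + Σ_{m≥1} a_{2m+1} x^{m−1} y. Then F is a well-defined holomorphic function on this polydisc satisfying F(ζ², ζ³) = f(ζ) for all ζ ∈ Ω, and sup |F| ≤ 3M on the polydisc. -/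
open Set Metric

/-- Lemma 2.5. For `f` bounded holomorphic on `{|ζ| < ε₀}` with
vanishing linear Taylor coefficient `a₁ = 0`, the function
`F(x,y) = a₀ + Σ_{m≥1} a_{2m} x^m + Σ_{m≥1} a_{2m+1} x^{m−1} y`
(i.e. `F(x,y) = Σ_{m≥0} a_{2m} x^m + y·Σ_{m≥0} a_{2m+3} x^m`)
is a well-defined holomorphic function on the polydisc `{|x|<ε₀²}×{|y|<2ε₀³}`,
satisfies `F(ζ²,ζ³) = f(ζ)` on the disc, and `sup |F| ≤ 3M` where `M = sup |f|`. -/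
theorem stmt4 (ε₀ M : ℝ) (hε : 0 < ε₀) (f : ℂ → ℂ)
    (hf : DifferentiableOn ℂ f (ball 0 ε₀)) (hd : deriv f 0 = 0)
    (hM : ∀ ζ ∈ ball (0 : ℂ) ε₀, ‖f ζ‖ ≤ M)
    (a : ℕ → ℂ) (ha : ∀ n, a n = iteratedDeriv n f 0 / n.factorial)
    (F : ℂ × ℂ → ℂ)
    (hF : F = fun p => (∑' m : ℕ, a (2 * m) * p.1 ^ m)
            + p.2 * ∑' m : ℕ, a (2 * m + 3) * p.1 ^ m) :
    DifferentiableOn ℂ F {p : ℂ × ℂ | ‖p.1‖ < ε₀ ^ 2 ∧ ‖p.2‖ < 2 * ε₀ ^ 3} ∧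
    (∀ ζ ∈ ball (0 : ℂ) ε₀, F (ζ ^ 2, ζ ^ 3) = f ζ) ∧
    ∀ p ∈ {p : ℂ × ℂ | ‖p.1‖ < ε₀ ^ 2 ∧ ‖p.2‖ < 2 * ε₀ ^ 3}, ‖F p‖ ≤ 3 * M := by
  subst hF
  have hM0 : 0 ≤ M := le_trans (norm_nonneg _) (hM 0 (mem_ball_self hε))
  have hε2 : (0 : ℝ) < ε₀ ^ 2 := pow_pos hε 2
  -- Taylor expansion
  have hTay : ∀ ζ ∈ ball (0 : ℂ) ε₀, HasSum (fun n : ℕ => a n * ζ ^ n) (f ζ) := by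
    intro ζ hζ
    have h := Complex.hasSum_taylorSeries_on_ball hf hζ
    have heq : (fun n : ℕ => a n * ζ ^ n)
        = fun n : ℕ => (n.factorial : ℂ)⁻¹ • (ζ - 0) ^ n • iteratedDeriv n f 0 := by
      funext n
      rw [ha n]
      simp only [smul_eq_mul, sub_zero, div_eq_mul_inv]
      ring
    rw [heq]
    exact h
  have hneg : ∀ w : ℂ, w ∈ ball (0 : ℂ) ε₀ → -w ∈ ball (0 : ℂ) ε₀ := by
    intro w hw
    rw [mem_ball_zero_iff, norm_neg]
    exact mem_ball_zero_iff.mp hw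
  have inj2 : Function.Injective (fun m : ℕ => 2 * m) := fun x y h => by
    have h' : 2 * x = 2 * y := h
    omega
  have inj2' : Function.Injective (fun m : ℕ => 2 * m + 1) := fun x y h => by
    have h' : 2 * x + 1 = 2 * y + 1 := h
    omega
  -- even part identity
  have hG : ∀ w ∈ ball (0 : ℂ) ε₀,
      HasSum (fun m : ℕ => a (2 * m) * (w ^ 2) ^ m) ((f w + f (-w)) / 2) := by
    intro w hw
    have h1 := hTay w hw
    have h2 := hTay (-w) (hneg w hw)
    have hs : HasSum (fun n : ℕ => (a n * w ^ n + a n * (-w) ^ n) / 2)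
        ((f w + f (-w)) / 2) := (h1.add h2).div_const 2
    have key : HasSum ((fun n : ℕ => (a n * w ^ n + a n * (-w) ^ n) / 2)
        ∘ (fun m : ℕ => 2 * m)) ((f w + f (-w)) / 2) := by
      refine (Function.Injective.hasSum_iff inj2 ?_).mpr hs
      intro n hn
      have hodd : Odd n := by
        rcases Nat.even_or_odd n with ⟨k, hk⟩ | ho
        · exact absurd ⟨k, show 2 * k = n by omega⟩ hn
        · exact ho
      rw [hodd.neg_pow]
      ring
    have heq : (fun m : ℕ => a (2 * m) * (w ^ 2) ^ m)
        = (fun n : ℕ => (a n * w ^ n + a n * (-w) ^ n) / 2) ∘ (fun m : ℕ => 2 * m) := by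
      funext m
      simp only [Function.comp_apply]
      rw [Even.neg_pow ⟨m, by ring⟩, ← pow_mul]
      ring
    rw [heq]
    exact key
  -- odd part identity
  have hOdd : ∀ w ∈ ball (0 : ℂ) ε₀,
      HasSum (fun m : ℕ => a (2 * m + 1) * w ^ (2 * m + 1)) ((f w - f (-w)) / 2) := by
    intro w hw
    have h1 := hTay w hw
    have h2 := hTay (-w) (hneg w hw)
    have hs : HasSum (fun n : ℕ => (a n * w ^ n - a n * (-w) ^ n) / 2)
        ((f w - f (-w)) / 2) := (h1.sub h2).div_const 2
    have key : HasSum ((fun n : ℕ => (a n * w ^ n - a n * (-w) ^ n) / 2)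
        ∘ (fun m : ℕ => 2 * m + 1)) ((f w - f (-w)) / 2) := by
      refine (Function.Injective.hasSum_iff inj2' ?_).mpr hs
      intro n hn
      have heven : Even n := by
        rcases Nat.even_or_odd n with he | ⟨k, hk⟩
        · exact he
        · exact absurd ⟨k, show 2 * k + 1 = n by omega⟩ hn
      rw [heven.neg_pow]
      ring
    have heq : (fun m : ℕ => a (2 * m + 1) * w ^ (2 * m + 1))
        = (fun n : ℕ => (a n * w ^ n - a n * (-w) ^ n) / 2) ∘ (fun m : ℕ => 2 * m + 1) := by
      funext m
      simp only [Function.comp_apply]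
      rw [Odd.neg_pow ⟨m, by ring⟩]
      ring
    rw [heq]
    exact key
  have ha1 : a 1 = 0 := by
    rw [ha 1, iteratedDeriv_one, hd]
    simp
  -- odd master identity
  have hH : ∀ w ∈ ball (0 : ℂ) ε₀,
      w ^ 3 * ∑' m : ℕ, a (2 * m + 3) * (w ^ 2) ^ m = (f w - f (-w)) / 2 := by
    intro w hw
    have ho := hOdd w hw
    have hz := Summable.tsum_eq_zero_add ho.summable
    calc w ^ 3 * ∑' m : ℕ, a (2 * m + 3) * (w ^ 2) ^ m
        = ∑' m : ℕ, a (2 * (m + 1) + 1) * w ^ (2 * (m + 1) + 1) := by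
          rw [← tsum_mul_left]
          refine tsum_congr fun m => ?_
          have h23 : 2 * (m + 1) + 1 = 2 * m + 3 := by ring
          rw [h23, pow_add, pow_mul]
          ring
      _ = (f w - f (-w)) / 2 := by
          rw [← ho.tsum_eq, hz]
          norm_num [ha1]
  -- coefficient bounds
  have hCoef : ∀ r : ℝ, 0 < r → r < ε₀ → ∃ C : ℝ, 0 ≤ C ∧ ∀ n, ‖a n‖ * r ^ n ≤ C := by
    intro r hr hrε
    have hmem : (r : ℂ) ∈ ball (0 : ℂ) ε₀ := by
      rw [mem_ball_zero_iff, Complex.norm_real, Real.norm_eq_abs, abs_of_pos hr]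
      exact hrε
    have hs : Summable (fun n : ℕ => ‖a n * (r : ℂ) ^ n‖) :=
      summable_norm_iff.mpr (hTay r hmem).summable
    refine ⟨∑' n : ℕ, ‖a n * (r : ℂ) ^ n‖, tsum_nonneg fun n => norm_nonneg _, fun n => ?_⟩
    have hle := Summable.le_tsum hs n fun i _ => norm_nonneg _
    simpa [norm_mul, norm_pow, Complex.norm_real, Real.norm_eq_abs, abs_of_pos hr] using hle
  -- differentiability of power sums
  have hdiffOn : ∀ b : ℕ → ℂ,
      (∀ r : ℝ, 0 < r → r < ε₀ → ∃ C : ℝ, 0 ≤ C ∧ ∀ m, ‖b m‖ * (r ^ 2) ^ m ≤ C) →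
      DifferentiableOn ℂ (fun x : ℂ => ∑' m : ℕ, b m * x ^ m) (ball (0 : ℂ) (ε₀ ^ 2)) := by
    intro b hb x hx
    rw [mem_ball_zero_iff] at hx
    have hsx : Real.sqrt ‖x‖ < ε₀ := by
      rw [show ε₀ = Real.sqrt (ε₀ ^ 2) from (Real.sqrt_sq hε.le).symm]
      exact Real.sqrt_lt_sqrt (norm_nonneg x) hx
    obtain ⟨r, hr1, hr2⟩ := exists_between hsx
    have hr0 : 0 < r := lt_of_le_of_lt (Real.sqrt_nonneg _) hr1
    have hxr : ‖x‖ < r ^ 2 := by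
      have h1 := Real.sq_sqrt (norm_nonneg x)
      nlinarith [Real.sqrt_nonneg ‖x‖]
    obtain ⟨C, hC0, hC⟩ := hb r hr0 hr2
    obtain ⟨s, hs1, hs2⟩ := exists_between hxr
    have hs0 : 0 ≤ s := le_trans (norm_nonneg x) hs1.le
    have hq : 0 ≤ s / r ^ 2 := by positivity
    have hq1 : s / r ^ 2 < 1 := (div_lt_one (by positivity)).mpr hs2
    have hgeo : Summable (fun m : ℕ => C * (s / r ^ 2) ^ m) :=
      (summable_geometric_of_lt_one hq hq1).mul_left C
    have hdo := Complex.differentiableOn_tsum_of_summable_norm hgeo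
      (fun m => ((differentiable_const (b m)).mul (differentiable_pow m)).differentiableOn)
      isOpen_ball
      (fun m w hw => by
        rw [mem_ball_zero_iff] at hw
        have h3 : ‖b m‖ ≤ C / (r ^ 2) ^ m := (le_div_iff₀ (by positivity)).mpr (hC m)
        calc ‖b m * w ^ m‖ = ‖b m‖ * ‖w‖ ^ m := by rw [norm_mul, norm_pow]
          _ ≤ (C / (r ^ 2) ^ m) * s ^ m :=
              mul_le_mul h3 (pow_le_pow_left₀ (norm_nonneg w) hw.le m)
                (by positivity) (by positivity)
          _ = C * (s / r ^ 2) ^ m := by rw [div_pow]; ring)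
    have hxs : x ∈ ball (0 : ℂ) s := mem_ball_zero_iff.mpr hs1
    exact ((hdo x hxs).differentiableAt (isOpen_ball.mem_nhds hxs)).differentiableWithinAt
  have hgdiff : DifferentiableOn ℂ (fun x : ℂ => ∑' m : ℕ, a (2 * m) * x ^ m)
      (ball (0 : ℂ) (ε₀ ^ 2)) := by
    refine hdiffOn _ fun r hr hrε => ?_
    obtain ⟨C, hC0, hC⟩ := hCoef r hr hrε
    exact ⟨C, hC0, fun m => by rw [← pow_mul]; exact hC (2 * m)⟩
  have hhdiff : DifferentiableOn ℂ (fun x : ℂ => ∑' m : ℕ, a (2 * m + 3) * x ^ m)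
      (ball (0 : ℂ) (ε₀ ^ 2)) := by
    refine hdiffOn _ fun r hr hrε => ?_
    obtain ⟨C, hC0, hC⟩ := hCoef r hr hrε
    refine ⟨C / r ^ 3, by positivity, fun m => ?_⟩
    rw [← pow_mul, le_div_iff₀ (by positivity)]
    calc ‖a (2 * m + 3)‖ * r ^ (2 * m) * r ^ 3
        = ‖a (2 * m + 3)‖ * r ^ (2 * m + 3) := by rw [pow_add]; ring
      _ ≤ C := hC _
  -- sqrt in ball
  have hsqrt : ∀ x : ℂ, ‖x‖ < ε₀ ^ 2 → ∃ w : ℂ, w ^ 2 = x ∧ w ∈ ball (0 : ℂ) ε₀ := by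
    intro x hx
    obtain ⟨w, hw⟩ := IsAlgClosed.exists_pow_nat_eq x (n := 2) (by norm_num)
    refine ⟨w, hw, ?_⟩
    rw [mem_ball_zero_iff]
    have h2 : ‖w‖ ^ 2 < ε₀ ^ 2 := by rw [← norm_pow, hw]; exact hx
    exact lt_of_pow_lt_pow_left₀ 2 hε.le h2
  -- bound on even sum
  have hgb : ∀ x : ℂ, ‖x‖ < ε₀ ^ 2 → ‖∑' m : ℕ, a (2 * m) * x ^ m‖ ≤ M := by
    intro x hx
    obtain ⟨w, hw, hwb⟩ := hsqrt x hx
    have hgw := (hG w hwb).tsum_eq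
    rw [hw] at hgw
    rw [hgw, norm_div]
    have hn2 : ‖(2 : ℂ)‖ = 2 := by simp
    rw [hn2]
    have hb1 := hM w hwb
    have hb2 := hM (-w) (hneg w hwb)
    have hadd := norm_add_le (f w) (f (-w))
    linarith
  -- H and its bound
  have hHdiff : DifferentiableOn ℂ (fun w : ℂ => ∑' m : ℕ, a (2 * m + 3) * (w ^ 2) ^ m)
      (ball (0 : ℂ) ε₀) := by
    have hmaps : MapsTo (fun w : ℂ => w ^ 2) (ball (0 : ℂ) ε₀) (ball (0 : ℂ) (ε₀ ^ 2)) := by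
      intro w hw
      rw [mem_ball_zero_iff] at hw ⊢
      rw [norm_pow]
      nlinarith [norm_nonneg w]
    have hsq : DifferentiableOn ℂ (fun w : ℂ => w ^ 2) (ball (0 : ℂ) ε₀) :=
      (differentiable_pow 2).differentiableOn
    exact hhdiff.comp hsq hmaps
  have hHb : ∀ w ∈ ball (0 : ℂ) ε₀,
      ‖∑' m : ℕ, a (2 * m + 3) * (w ^ 2) ^ m‖ ≤ M / ε₀ ^ 3 := by
    intro w hw
    rw [mem_ball_zero_iff] at hw
    have key : ∀ r : ℝ, ‖w‖ < r → r < ε₀ →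
        ‖∑' m : ℕ, a (2 * m + 3) * (w ^ 2) ^ m‖ ≤ M / r ^ 3 := by
      intro r hr1 hr2
      have hr0 : 0 < r := lt_of_le_of_lt (norm_nonneg w) hr1
      refine Complex.norm_le_of_forall_mem_frontier_norm_le (U := ball (0 : ℂ) r)
        (f := fun w : ℂ => ∑' m : ℕ, a (2 * m + 3) * (w ^ 2) ^ m)
        isBounded_ball ?_ ?_ ?_
      · apply DifferentiableOn.diffContOnCl
        apply hHdiff.mono
        exact subset_trans closure_ball_subset_closedBall (closedBall_subset_ball hr2)
      · intro z hz
        rw [frontier_ball 0 hr0.ne'] at hz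
        rw [mem_sphere_zero_iff_norm] at hz
        have hzb : z ∈ ball (0 : ℂ) ε₀ := mem_ball_zero_iff.mpr (hz ▸ hr2)
        have hid := hH z hzb
        have hv : ‖z ^ 3 * ∑' m : ℕ, a (2 * m + 3) * (z ^ 2) ^ m‖ ≤ M := by
          rw [hid, norm_div]
          have hn2 : ‖(2 : ℂ)‖ = 2 := by simp
          rw [hn2]
          have hb1 := hM z hzb
          have hb2 := hM (-z) (hneg z hzb)
          have hsub := norm_sub_le (f z) (f (-z))
          linarith
        rw [norm_mul, norm_pow, hz] at hv
        rw [le_div_iff₀ (by positivity)]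
        linarith
      · exact subset_closure (mem_ball_zero_iff.mpr hr1)
    have hlim : Filter.Tendsto (fun r : ℝ => M / r ^ 3)
        (nhdsWithin ε₀ (Iio ε₀)) (nhds (M / ε₀ ^ 3)) := by
      apply Filter.Tendsto.mono_left _ nhdsWithin_le_nhds
      exact Filter.Tendsto.div tendsto_const_nhds ((continuous_pow 3).tendsto ε₀)
        (by positivity)
    refine ge_of_tendsto hlim ?_
    filter_upwards [Ioo_mem_nhdsLT_of_mem (show ε₀ ∈ Ioc ‖w‖ ε₀ from ⟨hw, le_refl _⟩)]
      with r hr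
    exact key r hr.1 hr.2
  refine ⟨?_, ?_, ?_⟩
  · -- differentiability
    intro p hp
    obtain ⟨h1, h2⟩ := hp
    have hx : p.1 ∈ ball (0 : ℂ) (ε₀ ^ 2) := mem_ball_zero_iff.mpr h1
    have d1 : DifferentiableAt ℂ (fun x : ℂ => ∑' m : ℕ, a (2 * m) * x ^ m) p.1 :=
      (hgdiff p.1 hx).differentiableAt (isOpen_ball.mem_nhds hx)
    have d2 : DifferentiableAt ℂ (fun x : ℂ => ∑' m : ℕ, a (2 * m + 3) * x ^ m) p.1 :=
      (hhdiff p.1 hx).differentiableAt (isOpen_ball.mem_nhds hx)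
    exact ((d1.comp p differentiableAt_fst).add
      (differentiableAt_snd.mul (d2.comp p differentiableAt_fst))).differentiableWithinAt
  · -- identity
    intro ζ hζ
    show (∑' m : ℕ, a (2 * m) * (ζ ^ 2) ^ m) + ζ ^ 3 * ∑' m : ℕ, a (2 * m + 3) * (ζ ^ 2) ^ m
        = f ζ
    rw [(hG ζ hζ).tsum_eq, hH ζ hζ]
    ring
  · -- bound
    intro p hp
    obtain ⟨h1, h2⟩ := hp
    obtain ⟨w, hw, hwb⟩ := hsqrt p.1 h1
    have hg := hgb p.1 h1
    have hhb : ‖∑' m : ℕ, a (2 * m + 3) * p.1 ^ m‖ ≤ M / ε₀ ^ 3 := by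
      have hb := hHb w hwb
      rwa [hw] at hb
    calc ‖(∑' m : ℕ, a (2 * m) * p.1 ^ m) + p.2 * ∑' m : ℕ, a (2 * m + 3) * p.1 ^ m‖
        ≤ ‖∑' m : ℕ, a (2 * m) * p.1 ^ m‖ + ‖p.2‖ * ‖∑' m : ℕ, a (2 * m + 3) * p.1 ^ m‖ := by
          refine (norm_add_le _ _).trans ?_
          rw [norm_mul]
      _ ≤ M + (2 * ε₀ ^ 3) * (M / ε₀ ^ 3) :=
          add_le_add hg (mul_le_mul h2.le hhb (norm_nonneg _) (by positivity))
      _ = 3 * M := by field_simp; ring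
end

section
/- The coefficients Aν (ν ≥ 2) of the formal solution A(X) = X + Σ_{ν≥2} Aν X^ν of A(X) − X = c·A(X)²/(1 − R·A(X)) (c, R > 0) are all strictly positive real numbers, and they satisfy the recursive bound A_{n+1} ≥ [[ R(1+MR)·A(X)² / (1 − R·A(X)) ]]_{n+1} whenever c = 2KR(1+MR) with K ≥ 1, where [[·]]_ℓ denotes the coefficient of X^ℓ. -/
open PowerSeries

/-- The coefficients `Aν` (`ν ≥ 2`) of the formal solution
`A(X) = X + Σ_{ν≥2} Aν Xν` of `(A − X)(1 − RA) = cA²` with `c = 2KR(1+MR)`, `K ≥ 1`,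
are strictly positive, and satisfy
`A_{n+1} ≥ [[ R(1+MR)·A² / (1 − R·A) ]]_{n+1}` for every `n ≥ 1`. -/
theorem stmt11 (K R M : ℝ) (hK : 1 ≤ K) (hR : 0 < R) (hM : 0 < M)
    (A : PowerSeries ℝ) (h0 : constantCoeff A = 0) (h1 : coeff 1 A = 1)
    (heq : (A - X) * (1 - C R * A) = C (2 * K * R * (1 + M * R)) * A ^ 2) :
    (∀ ν : ℕ, 2 ≤ ν → 0 < coeff ν A) ∧
    ∀ n : ℕ, 1 ≤ n →
      coeff (n + 1) (C (R * (1 + M * R)) * A ^ 2 * (1 - C R * A)⁻¹)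
        ≤ coeff (n + 1) A := by
  set c : ℝ := 2 * K * R * (1 + M * R) with hc_def
  have hc : 0 < c := by
    show 0 < 2 * K * R * (1 + M * R)
    have h1p : (0:ℝ) < 1 + M * R := by nlinarith
    nlinarith [mul_pos (mul_pos (show (0:ℝ) < 2 * K by linarith) hR) h1p]
  have hA0 : coeff 0 A = 0 := by simpa [PowerSeries.coeff_zero_eq_constantCoeff] using h0
  -- key rearrangement of the functional equation
  have key : A = X + C c * A ^ 2 + C R * (A * (A - X)) := by
    linear_combination heq
  -- coefficients of A - X are the coefficients of A in degrees ≥ 2, and 0 in degrees 0,1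
  have hAX : ∀ j : ℕ, coeff j (A - X) = if j = 0 then 0 else if j = 1 then 0 else coeff j A := by
    intro j
    rcases j with _ | _ | j
    · simp [h0]
    · simp [h1]
    · simp [PowerSeries.coeff_X]
  -- positivity by strong induction
  have main : ∀ n : ℕ, 0 ≤ coeff n A ∧ (2 ≤ n → 0 < coeff n A) := by
    intro n
    induction n using Nat.strong_induction_on with
    | _ n ih =>
      rcases n with _ | _ | m
      · simp [PowerSeries.coeff_zero_eq_constantCoeff, h0]
      · simp [h1]
      · set n := m + 2 with hn
        have hn2 : 2 ≤ n := by omega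
        have hcoeff : coeff n A = c * coeff n (A ^ 2) + R * coeff n (A * (A - X)) := by
          conv_lhs => rw [key]
          simp [PowerSeries.coeff_X, hn]
        have hsq : coeff n (A ^ 2) = ∑ p ∈ Finset.HasAntidiagonal.antidiagonal n, coeff p.1 A * coeff p.2 A := by
          rw [sq, PowerSeries.coeff_mul]
        have hterm : ∀ p ∈ Finset.HasAntidiagonal.antidiagonal n, 0 ≤ coeff p.1 A * coeff p.2 A := by
          rintro ⟨i, j⟩ hp
          rw [Finset.HasAntidiagonal.mem_antidiagonal] at hp
          rcases Nat.eq_zero_or_pos i with hi | hi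
          · subst hi; simp [hA0]
          rcases Nat.eq_zero_or_pos j with hj | hj
          · subst hj; simp [hA0]
          have h1le : i < n := by omega
          have h2le : j < n := by omega
          exact mul_nonneg (ih i h1le).1 (ih j h2le).1
        have hprev : 0 < coeff (n - 1) A := by
          rcases Nat.lt_or_ge (n - 1) 2 with h | h
          · have : n - 1 = 1 := by omega
            rw [this, h1]; norm_num
          · exact (ih (n - 1) (by omega)).2 h
        have hsqpos : 0 < coeff n (A ^ 2) := by
          rw [hsq]
          have hmem : (1, n - 1) ∈ Finset.HasAntidiagonal.antidiagonal n := by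
            rw [Finset.HasAntidiagonal.mem_antidiagonal]; omega
          have hle := Finset.single_le_sum hterm hmem
          have : (0:ℝ) < coeff 1 A * coeff (n - 1) A := by
            rw [h1]; simpa using hprev
          linarith
        have hmix : 0 ≤ coeff n (A * (A - X)) := by
          rw [PowerSeries.coeff_mul]
          apply Finset.sum_nonneg
          rintro ⟨i, j⟩ hp
          rw [Finset.HasAntidiagonal.mem_antidiagonal] at hp
          have hp' : i + j = n := hp
          rcases Nat.eq_zero_or_pos i with hi | hi
          · subst hi; simp [PowerSeries.coeff_zero_eq_constantCoeff, h0]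
          rcases Nat.eq_zero_or_pos j with hj | hj
          · subst hj; simp [hAX]
          have hiA : 0 ≤ coeff i A := (ih i (by omega)).1
          have hjAX : 0 ≤ coeff j (A - X) := by
            rw [hAX]
            split_ifs with hj0 hj1
            · exact le_refl 0
            · exact le_refl 0
            · exact (ih j (by omega)).1
          exact mul_nonneg hiA hjAX
        have hpos : 0 < coeff n A := by
          rw [hcoeff]; nlinarith
        exact ⟨le_of_lt hpos, fun _ => hpos⟩
  refine ⟨fun ν hν => (main ν).2 hν, ?_⟩
  intro n hn
  have hu : constantCoeff (1 - C R * A) ≠ 0 := by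
    simp [h0]
  have hinv : A - X = C c * A ^ 2 * (1 - C R * A)⁻¹ := by
    rw [PowerSeries.eq_mul_inv_iff_mul_eq hu, heq]
  have hsplit : C c * A ^ 2 * (1 - C R * A)⁻¹
      = C (2 * K) * (C (R * (1 + M * R)) * A ^ 2 * (1 - C R * A)⁻¹) := by
    rw [← mul_assoc, ← mul_assoc, ← map_mul]
    rw [hc_def]
    ring_nf
  have hx : coeff (n + 1) (X : PowerSeries ℝ) = 0 := by
    rw [PowerSeries.coeff_X, if_neg (by omega)]
  have hco : coeff (n + 1) A
      = 2 * K * coeff (n + 1) (C (R * (1 + M * R)) * A ^ 2 * (1 - C R * A)⁻¹) := by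
    have := congrArg (coeff (n + 1)) hinv
    rw [hsplit, PowerSeries.coeff_C_mul, map_sub, hx] at this
    linarith
  have hApos : 0 < coeff (n + 1) A := (main (n + 1)).2 (by omega)
  nlinarith [hco, hApos]
end
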